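/- Let ζ₈ = exp(2πi/8), let σ be the ring automorphism of ℤ[ζ₈] determined by ζ₈ ↦ ζ₈³, let W₈ ⊂ ℂ ≅ ℝ² be the closed regular octagon centered at the origin with edge length 1 whose edges are perpendicular to the directions exp(ikπ/4) (k = 0,…,7), and let T = {x ∈ ℤ[ζ₈] : σ(x) ∈ W₈} be the Ammann–Beenker vertex set. Then a nonzero x ∈ T, written uniquely as x = x₁ + x₂ζ₈ with x₁, x₂ ∈ ℤ[√2], is visible from the origin in T (i.e., there is no t ∈ (0,1) with t·x ∈ T) if and only if (1+√2)·σ(x) ∉ W₈ and the ideal of ℤ[√2] generated by x₁ and x₂ is all of ℤ[√2]. -/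

import Mathlib

/-!
Write `x = u + v ζ₈` with `u, v ∈ ℤ[√2]`. Since `1` and `ζ₈` are linearly independent over `ℝ`,
a real `t` has `t x ∈ ℤ[ζ₈]` exactly when `t u, t v ∈ ℤ[√2]`, and then `σ (t x) = t' σ x` where
`t'` is the Galois conjugate of `t`. The window `W₈` is balanced, so whether `t x ∈ T` only
depends on `|t'|`.

If `u, v` are coprime, a Bézout relation `a u + b v = 1` forces `t ∈ ℤ[√2]`, and every element of
`ℤ[√2] ∩ (0, 1)` has `|t'| ≥ 1 + √2`: so `x` is hidden only if `(1 + √2) σ x ∈ W₈`, in which case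
`t = √2 - 1` does hide it. If `u, v` are not coprime, then, `ℤ[√2]` being norm-Euclidean, they
have a common non-unit divisor `d`; after multiplication by a unit `±(1 + √2)ⁿ` it satisfies
`d > 1` and `|d'| ≥ 1`, and `t = 1 / d` hides `x`.
-/

open Complex

/-- The primitive 8-th root of unity. -/
noncomputable def zeta8 : ℂ := Complex.exp (2 * Real.pi * Complex.I / 8)

/-- The ring of 8-th cyclotomic integers, as a subring of ℂ. -/
noncomputable def R8 : Subring ℂ := Subring.closure {zeta8}

/-- The subring ℤ[√2] of ℂ, generated by √2 = ζ₈ + ζ₈⁻¹. -/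
noncomputable def S8 : Subring ℂ := Subring.closure {zeta8 + zeta8⁻¹}

/-- The closed regular octagon of edge length 1 centered at the origin whose
edges are perpendicular to the eight directions exp(ikπ/4): the intersection of
the half-planes Re(z · conj(exp(ikπ/4))) ≤ (1+√2)/2, the apothem of such an
octagon being (1/2)·cot(π/8) = (1+√2)/2. -/
noncomputable def W8 : Set ℂ :=
  {z : ℂ | ∀ k : Fin 8,
    (z * (starRingEnd ℂ) (Complex.exp (((k : ℕ) : ℂ) * Real.pi * Complex.I / 4))).re ≤
      (1 + Real.sqrt 2) / 2}

/-- The Ammann–Beenker vertex set T = {x ∈ ℤ[ζ₈] : σ(x) ∈ W₈}, where σ is the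
star map. -/
noncomputable def ABverts (σ : R8 →+* ℂ) : Set ℂ :=
  {z : ℂ | ∃ hz : z ∈ R8, σ ⟨z, hz⟩ ∈ W8}

namespace AmmannBeenker

lemma zeta8_eq : zeta8 = ⟨√2 / 2, √2 / 2⟩ := by
  have h : 2 * Real.pi * I / 8 = ((Real.pi / 4 : ℝ) : ℂ) * I := by push_cast; ring
  rw [zeta8, h, exp_mul_I, ← ofReal_cos, ← ofReal_sin, Real.cos_pi_div_four,
    Real.sin_pi_div_four]
  apply Complex.ext <;> simp

lemma zeta8_pow_four : zeta8 ^ 4 = -1 := by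
  rw [zeta8, ← exp_nat_mul, ← exp_pi_mul_I]; push_cast; ring_nf

lemma exp_nat_mul_pi_mul_I_div_four (k : ℕ) :
    exp (k * Real.pi * I / 4) = zeta8 ^ k := by
  rw [zeta8, ← exp_nat_mul]; ring_nf

lemma zeta8_sq_eq_I : zeta8 ^ 2 = I := by
  rw [zeta8, ← exp_nat_mul]
  convert exp_pi_div_two_mul_I using 2
  push_cast; ring

lemma ofReal_sqrt_two_eq : ((√2 : ℝ) : ℂ) = zeta8 - zeta8 ^ 3 := by
  have h : zeta8 = (√2 / 2 : ℝ) * (1 + I) := by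
    rw [zeta8_eq]; apply Complex.ext <;> simp
  have hI : zeta8 ^ 3 = I * zeta8 := by rw [pow_succ, zeta8_sq_eq_I]
  rw [hI, h]; push_cast
  linear_combination ((√2 : ℂ) / 2) * I_sq

lemma zeta8_sq : zeta8 ^ 2 = √2 * zeta8 - 1 := by
  rw [ofReal_sqrt_two_eq]; linear_combination zeta8_pow_four

lemma zeta8_add_inv : zeta8 + zeta8⁻¹ = √2 := by
  have h : zeta8 * -zeta8 ^ 3 = 1 := by linear_combination -zeta8_pow_four
  rw [ofReal_sqrt_two_eq, inv_eq_of_mul_eq_one_right h]; ring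

lemma ofReal_add_ofReal_mul_zeta8_inj {a b c d : ℝ} :
    (a : ℂ) + b * zeta8 = c + d * zeta8 ↔ a = c ∧ b = d := by
  refine ⟨fun h => ?_, fun ⟨hac, hbd⟩ => by rw [hac, hbd]⟩
  have him := congrArg im h
  have hre := congrArg re h
  simp [zeta8_eq] at him hre
  have hbd : b = d := by simpa using him
  exact ⟨by simpa [hbd] using hre, hbd⟩

lemma zeta8_pow_eight : zeta8 ^ 8 = 1 := by
  rw [show 8 = 4 * 2 by rfl, pow_mul, zeta8_pow_four]; norm_num

lemma exp_fin_add_four (k : Fin 8) :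
    exp (((k + 4 : Fin 8) : ℕ) * Real.pi * I / 4) = -exp ((k : ℕ) * Real.pi * I / 4) := by
  rw [exp_nat_mul_pi_mul_I_div_four, exp_nat_mul_pi_mul_I_div_four, Fin.val_add,
    ← pow_eq_pow_mod _ zeta8_pow_eight, pow_add]
  exact (congrArg (zeta8 ^ (k : ℕ) * ·) zeta8_pow_four).trans (mul_neg_one _)

lemma abs_re_le_of_mem_W8 {z : ℂ} (hz : z ∈ W8) (k : Fin 8) :
    |(z * starRingEnd ℂ (exp ((k : ℕ) * Real.pi * I / 4))).re| ≤ (1 + √2) / 2 := by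
  have h := hz (k + 4)
  rw [exp_fin_add_four, map_neg, mul_neg, neg_re] at h
  exact abs_le.2 ⟨by linarith, hz k⟩

lemma balanced_W8 : Balanced ℝ W8 := by
  refine balanced_iff_smul_mem.2 fun a ha z hz k => ?_
  rw [real_smul, mul_assoc, re_ofReal_mul]
  calc _ ≤ |a| * |(z * starRingEnd ℂ (exp ((k : ℕ) * Real.pi * I / 4))).re| :=
        (le_abs_self _).trans (abs_mul _ _).le
    _ ≤ 1 * ((1 + √2) / 2) :=
        mul_le_mul ha (abs_re_le_of_mem_W8 hz k) (abs_nonneg _) zero_le_one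
    _ = (1 + √2) / 2 := one_mul _

lemma ofReal_mul_mem_W8_of_abs_le {z : ℂ} {a b : ℝ} (h : (b : ℂ) * z ∈ W8) (hab : |a| ≤ |b|) :
    (a : ℂ) * z ∈ W8 := by
  rw [← real_smul] at h ⊢
  exact balanced_W8.smul_mem_mono h hab

open Zsqrtd

local notation "ι" => Zsqrtd.toReal (d := 2) zero_le_two

lemma two_ne_mul_self (n : ℤ) : (2 : ℤ) ≠ n * n := by
  intro h
  have : n.natAbs * n.natAbs = 2 := by zify; rw [← abs_mul_abs_self n] at h; linarith
  have : n.natAbs ≤ 2 := by nlinarith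
  interval_cases n.natAbs <;> omega

lemma toReal_two_injective : Function.Injective ι :=
  Zsqrtd.toReal_injective _ two_ne_mul_self

lemma toReal_star (w : ℤ√2) : ι (star w) = w.re - w.im * √2 := by
  simp [sub_eq_add_neg]

lemma sqrt_two_bounds : 1.4 < √2 ∧ √2 < 1.5 := by
  constructor
  · rw [Real.lt_sqrt] <;> norm_num
  · rw [Real.sqrt_lt'] <;> norm_num

lemma one_add_sqrt_two_le_abs_toReal_star {w : ℤ√2} (h0 : 0 < ι w) (h1 : ι w < 1) :
    1 + √2 ≤ |ι (star w)| := by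
  by_contra! h
  rw [toReal_star, abs_lt] at h
  obtain ⟨a, b⟩ := w
  simp only [toReal_apply, Int.cast_ofNat] at h0 h1 h
  -- `2 a = w + w'` and `2 b √2 = w - w'` confine `(a, b)` to a small box
  obtain ⟨hs1, hs2⟩ := sqrt_two_bounds
  have ha1 : -1 ≤ a := by
    have : (-2 : ℝ) < a := by linarith
    exact_mod_cast this
  have ha2 : a ≤ 1 := by
    have : (a : ℝ) < 2 := by linarith
    have : a < 2 := by exact_mod_cast this
    omega
  have hb1 : 0 ≤ b := by
    have : (-1 : ℝ) < b := by nlinarith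
    exact_mod_cast this
  have hb2 : b ≤ 1 := by
    have : (b : ℝ) < 2 := by nlinarith
    have : b < 2 := by exact_mod_cast this
    omega
  interval_cases a <;> interval_cases b <;> push_cast at h0 h1 h <;> linarith

lemma _root_.Int.exists_two_mul_abs_sub_mul_le (p : ℤ) {n : ℤ} (hn : n ≠ 0) :
    ∃ a : ℤ, 2 * |p - a * n| ≤ |n| := by
  refine ⟨Int.bdiv p n.natAbs * n.sign, ?_⟩
  have hm : 0 < n.natAbs := Int.natAbs_pos.2 hn
  have hlo := Int.le_bmod (x := p) hm
  have hhi := Int.bmod_le (x := p) hm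
  have hsplit := Int.bmod_add_bdiv' p n.natAbs
  rw [Int.natCast_natAbs] at hlo hhi hsplit
  rw [mul_assoc, Int.sign_mul_self_eq_abs,
    show p - Int.bdiv p n.natAbs * |n| = p.bmod n.natAbs by linarith]
  have : 0 < |n| := abs_pos.2 hn
  generalize |n| = m at *
  cases abs_cases (p.bmod n.natAbs) <;> omega

lemma exists_natAbs_norm_sub_mul_lt (u : ℤ√2) {v : ℤ√2} (hv : v ≠ 0) :
    ∃ q, (u - v * q).norm.natAbs < v.norm.natAbs := by
  set n := v.norm
  have hn : n ≠ 0 := fun h => hv ((norm_eq_zero two_ne_mul_self v).1 h)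
  obtain ⟨a, ha⟩ := (u * star v).re.exists_two_mul_abs_sub_mul_le hn
  obtain ⟨b, hb⟩ := (u * star v).im.exists_two_mul_abs_sub_mul_le hn
  refine ⟨⟨a, b⟩, ?_⟩
  -- the remainder, multiplied by `star v`, has coordinates `A`, `B` of size at most `|n| / 2`
  set A := (u * star v).re - a * n
  set B := (u * star v).im - b * n
  have hnorm : (u - v * ⟨a, b⟩).norm * n = A ^ 2 - 2 * B ^ 2 := by
    have hr : (u - v * ⟨a, b⟩) * star v = ⟨A, B⟩ := by
      have : v * star v = n := (norm_eq_mul_conj v).symm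
      ext <;> simp [A, B, n, Zsqrtd.norm_def] <;> ring
    rw [show n = (star v).norm from (norm_conj v).symm, ← norm_mul, hr, Zsqrtd.norm_def]; ring
  have hA : 4 * A ^ 2 ≤ n ^ 2 := by nlinarith [sq_abs A, sq_abs n, abs_nonneg A]
  have hB : 4 * B ^ 2 ≤ n ^ 2 := by nlinarith [sq_abs B, sq_abs n, abs_nonneg B]
  have h2 : 2 * |(u - v * ⟨a, b⟩).norm * n| ≤ n ^ 2 := by
    rw [hnorm]
    cases abs_cases (A ^ 2 - 2 * B ^ 2) <;> nlinarith [sq_nonneg A, sq_nonneg B]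
  have h3 : |(u - v * ⟨a, b⟩).norm| < |n| := by
    rw [abs_mul, ← sq_abs n] at h2
    nlinarith [abs_pos.2 hn]
  zify
  exact h3

lemma natAbs_norm_le_natAbs_norm_mul (a : ℤ√2) {b : ℤ√2} (hb : b ≠ 0) :
    a.norm.natAbs ≤ (a * b).norm.natAbs := by
  rw [norm_mul, Int.natAbs_mul]
  refine Nat.le_mul_of_pos_right _ (Int.natAbs_pos.2 ?_)
  exact fun h => hb ((norm_eq_zero two_ne_mul_self b).1 h)

noncomputable instance : EuclideanDomain (ℤ√2) :=
  { Zsqrtd.commRing, Zsqrtd.nontrivial with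
    quotient := fun u v => if hv : v = 0 then 0 else (exists_natAbs_norm_sub_mul_lt u hv).choose
    quotient_zero := fun _ => dif_pos rfl
    remainder := fun u v =>
      u - v * if hv : v = 0 then 0 else (exists_natAbs_norm_sub_mul_lt u hv).choose
    quotient_mul_add_remainder_eq := fun _ _ => add_sub_cancel _ _
    r := InvImage (· < ·) fun w => w.norm.natAbs
    r_wellFounded := (measure fun w : ℤ√2 => w.norm.natAbs).wf
    remainder_lt := fun u v hv => by
      simp only [InvImage, dif_neg hv]
      exact (exists_natAbs_norm_sub_mul_lt u hv).choose_spec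
    mul_left_not_lt := fun a b hb => (natAbs_norm_le_natAbs_norm_mul a hb).not_gt }

def silverMean : (ℤ√2)ˣ := ⟨⟨1, 1⟩, ⟨-1, 1⟩, by decide, by decide⟩

lemma abs_toReal_star_silverMean_zpow (n : ℤ) :
    |ι (star ((silverMean ^ n : (ℤ√2)ˣ) : ℤ√2))| = (1 + √2) ^ (-n) := by
  have hstar : ι (star (silverMean : ℤ√2)) = -(1 + √2)⁻¹ := by
    have : (1 + √2) * (√2 - 1) = 1 := by nlinarith [Real.sq_sqrt (zero_le_two : (0:ℝ) ≤ 2)]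
    rw [toReal_star, inv_eq_of_mul_eq_one_right this]
    simp [silverMean]
  let f : (ℤ√2)ˣ →* ℝˣ := Units.map (RingHom.comp ι (starRingEnd (ℤ√2))).toMonoidHom
  have hf (e : (ℤ√2)ˣ) : ι (star (e : ℤ√2)) = (f e : ℝ) := rfl
  rw [hf, map_zpow, Units.val_zpow_eq_zpow_val, ← hf, hstar, abs_zpow, abs_neg, abs_inv,
    abs_of_pos (by positivity), zpow_neg, inv_zpow]

lemma one_lt_one_add_sqrt_two : 1 < 1 + √2 := lt_add_of_pos_right 1 (Real.sqrt_pos.2 two_pos)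

lemma toReal_ne_zero {w : ℤ√2} (hw : w ≠ 0) : ι w ≠ 0 :=
  (map_ne_zero_iff _ toReal_two_injective).2 hw

lemma exists_unit_mul_mem_fundamentalDomain {d : ℤ√2} (hd : d ≠ 0) :
    ∃ e : (ℤ√2)ˣ, 0 < ι (d * e) ∧ 1 ≤ |ι (star (d * e))| ∧ |ι (star (d * e))| < 1 + √2 := by
  have hpos : 0 < |ι (star d)| := abs_pos.2 (toReal_ne_zero (star_ne_zero.2 hd))
  obtain ⟨n, hlo, hhi⟩ := exists_mem_Ico_zpow hpos one_lt_one_add_sqrt_two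
  have habs : |ι (star (d * (silverMean ^ n : (ℤ√2)ˣ)))| = |ι (star d)| * (1 + √2) ^ (-n) := by
    rw [star_mul', map_mul, abs_mul, abs_toReal_star_silverMean_zpow]
  have hunit : (1 + √2) ^ n * (1 + √2) ^ (-n) = 1 := by
    rw [← zpow_add₀ (by positivity), add_neg_cancel, zpow_zero]
  have hlo' : 1 ≤ |ι (star (d * (silverMean ^ n : (ℤ√2)ˣ)))| := by
    rw [habs]
    calc (1 : ℝ) = (1 + √2) ^ n * (1 + √2) ^ (-n) := hunit.symm
      _ ≤ _ := by gcongr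
  have hhi' : |ι (star (d * (silverMean ^ n : (ℤ√2)ˣ)))| < 1 + √2 := by
    rw [habs]
    calc _ < (1 + √2) ^ (n + 1) * (1 + √2) ^ (-n) := by gcongr
      _ = 1 + √2 := by rw [← zpow_add₀ (by positivity)]; simp
  rcases (toReal_ne_zero (mul_ne_zero hd (silverMean ^ n).ne_zero)).lt_or_gt with hneg | hpos
  · refine ⟨-(silverMean ^ n), ?_, ?_, ?_⟩ <;>
      simp only [Units.val_neg, mul_neg, star_neg, map_neg, abs_neg, neg_pos] <;> assumption
  · exact ⟨silverMean ^ n, hpos, hlo', hhi'⟩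

lemma exists_unit_one_lt_toReal_mul {d : ℤ√2} (hd0 : d ≠ 0) (hd : ¬IsUnit d) :
    ∃ e : (ℤ√2)ˣ, 1 < ι (d * e) ∧ 1 ≤ |ι (star (d * e))| := by
  obtain ⟨e, hpos, hlo, hhi⟩ := exists_unit_mul_mem_fundamentalDomain hd0
  refine ⟨e, ?_, hlo⟩
  rcases lt_trichotomy (ι (d * e)) 1 with hlt | heq | hgt
  · exact absurd (one_add_sqrt_two_le_abs_toReal_star hpos hlt) hhi.not_ge
  · have hde : d * e = 1 := toReal_two_injective (heq.trans (map_one _).symm)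
    exact absurd (IsUnit.of_mul_eq_one _ hde) hd
  · exact hgt

lemma zeta8_mem_R8 : zeta8 ∈ R8 := Subring.subset_closure rfl

lemma ofReal_toReal_mem {S : Subring ℂ} (hS : ((√2 : ℝ) : ℂ) ∈ S) (w : ℤ√2) :
    (ι w : ℂ) ∈ S := by
  simp only [toReal_apply, Int.cast_ofNat, ofReal_add, ofReal_mul, ofReal_intCast]
  exact add_mem (intCast_mem _ _) (mul_mem (intCast_mem _ _) hS)

lemma ofReal_toReal_mem_R8 (w : ℤ√2) : (ι w : ℂ) ∈ R8 := by
  refine ofReal_toReal_mem ?_ w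
  rw [ofReal_sqrt_two_eq]
  exact sub_mem zeta8_mem_R8 (pow_mem zeta8_mem_R8 3)

lemma mem_R8_iff {z : ℂ} : z ∈ R8 ↔ ∃ u v : ℤ√2, (ι u : ℂ) + ι v * zeta8 = z := by
  refine ⟨fun hz => ?_, ?_⟩
  · induction hz using Subring.closure_induction with
    | mem y hy => exact ⟨0, 1, by rw [Set.mem_singleton_iff.1 hy]; simp⟩
    | one => exact ⟨1, 0, by simp⟩
    | zero => exact ⟨0, 0, by simp⟩
    | add _ _ _ _ ha hb =>
      obtain ⟨u, v, rfl⟩ := ha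
      obtain ⟨u', v', rfl⟩ := hb
      exact ⟨u + u', v + v', by push_cast [map_add]; ring⟩
    | neg _ _ ha =>
      obtain ⟨u, v, rfl⟩ := ha
      exact ⟨-u, -v, by push_cast [map_neg]; ring⟩
    | mul _ _ _ _ ha hb =>
      obtain ⟨u, v, rfl⟩ := ha
      obtain ⟨u', v', rfl⟩ := hb
      refine ⟨u * u' - v * v', u * v' + v * u' + v * v' * sqrtd, ?_⟩
      have hs : ι sqrtd = √2 := by simp
      push_cast [map_add, map_sub, map_mul, hs]
      linear_combination (-(ι v * ι v') : ℂ) * zeta8_sq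
  · rintro ⟨u, v, rfl⟩
    exact add_mem (ofReal_toReal_mem_R8 u) (mul_mem (ofReal_toReal_mem_R8 v) zeta8_mem_R8)

lemma ofReal_toReal_mem_S8 (w : ℤ√2) : (ι w : ℂ) ∈ S8 :=
  ofReal_toReal_mem (by rw [← zeta8_add_inv]; exact Subring.subset_closure rfl) w

lemma S8_le_range : S8 ≤ (ofRealHom.comp ι).range := by
  rw [S8, zeta8_add_inv, Subring.closure_le, Set.singleton_subset_iff]
  exact ⟨sqrtd, by simp⟩

noncomputable def toS8 : ℤ√2 ≃+* S8 :=
  RingEquiv.ofBijective ((ofRealHom.comp ι).codRestrict S8 ofReal_toReal_mem_S8)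
    ⟨fun _ _ h => toReal_two_injective (ofReal_injective (congrArg Subtype.val h)),
      fun z => (S8_le_range z.2).imp fun _ h => Subtype.ext h⟩

@[simp]
lemma coe_toS8 (w : ℤ√2) : (toS8 w : ℂ) = ι w := rfl

lemma _root_.RingEquiv.isCoprime_apply_iff {R S : Type*} [CommSemiring R] [CommSemiring S]
    (e : R ≃+* S) {a b : R} : IsCoprime (e a) (e b) ↔ IsCoprime a b :=
  ⟨fun h => by simpa using h.map e.symm.toRingHom, fun h => h.map e.toRingHom⟩

section StarMap

variable {σ : R8 →+* ℂ}

lemma star_map_ofReal_toReal (hσ : σ ⟨zeta8, zeta8_mem_R8⟩ = zeta8 ^ 3) (w : ℤ√2) :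
    σ ⟨ι w, ofReal_toReal_mem_R8 w⟩ = ι (star w) := by
  let ρ : ℤ√2 →+* R8 := (ofRealHom.comp ι).codRestrict R8 ofReal_toReal_mem_R8
  suffices σ.comp ρ = ofRealHom.comp (RingHom.comp ι (starRingEnd _)) from
    DFunLike.congr_fun this w
  refine Zsqrtd.hom_ext _ _ ?_
  have hρ : ρ sqrtd = ⟨zeta8, zeta8_mem_R8⟩ - ⟨zeta8, zeta8_mem_R8⟩ ^ 3 :=
    Subtype.ext (by simpa [ρ] using ofReal_sqrt_two_eq)
  have h9 : (zeta8 ^ 3) ^ 3 = zeta8 := by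
    rw [← pow_mul, pow_eq_pow_mod _ zeta8_pow_eight, pow_one]
  have hstar : ι (star sqrtd) = -√2 := by simp
  simp only [RingHom.comp_apply, hρ, map_sub, map_pow, hσ, h9, starRingEnd_apply, hstar]
  rw [ofRealHom_eq_coe, ofReal_neg, ofReal_sqrt_two_eq]
  ring

lemma star_map_eq_ofReal_toReal_mul (hσ : σ ⟨zeta8, zeta8_mem_R8⟩ = zeta8 ^ 3) {x y : ℂ}
    (hx : x ∈ R8) (hy : y ∈ R8) {w : ℤ√2} (h : x = ι w * y) :
    σ ⟨x, hx⟩ = ι (star w) * σ ⟨y, hy⟩ := by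
  subst h
  rw [← star_map_ofReal_toReal hσ, ← map_mul]
  rfl

lemma exists_mem_ABverts_of_one_add_sqrt_two_mul_mem_W8
    (hσ : σ ⟨zeta8, zeta8_mem_R8⟩ = zeta8 ^ 3) {x : ℂ} (hx : x ∈ R8)
    (hW : (1 + √2 : ℂ) * σ ⟨x, hx⟩ ∈ W8) :
    ∃ t : ℝ, t ∈ Set.Ioo 0 1 ∧ (t : ℂ) * x ∈ ABverts σ := by
  have hW' : ((1 + √2 : ℝ) : ℂ) * σ ⟨x, hx⟩ ∈ W8 := by exact_mod_cast hW
  have hs := sqrt_two_bounds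
  have hι : ι ⟨-1, 1⟩ = √2 - 1 := by simp; ring
  have hι' : ι (star ⟨-1, 1⟩) = -(1 + √2) := by simp; ring
  have htx : (ι ⟨-1, 1⟩ : ℂ) * x ∈ R8 := mul_mem (ofReal_toReal_mem_R8 _) hx
  refine ⟨ι ⟨-1, 1⟩, by rw [hι]; constructor <;> linarith, htx, ?_⟩
  rw [star_map_eq_ofReal_toReal_mul hσ htx hx rfl, hι']
  exact ofReal_mul_mem_W8_of_abs_le hW' (abs_neg _).le

lemma exists_mem_ABverts_of_not_isCoprime (hσ : σ ⟨zeta8, zeta8_mem_R8⟩ = zeta8 ^ 3)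
    {u v : ℤ√2} (huv : ¬(u = 0 ∧ v = 0)) (hx : (ι u : ℂ) + ι v * zeta8 ∈ ABverts σ)
    (h : ¬IsCoprime u v) :
    ∃ t : ℝ, t ∈ Set.Ioo 0 1 ∧ (t : ℂ) * ((ι u : ℂ) + ι v * zeta8) ∈ ABverts σ := by
  obtain ⟨d, hdu, hd0, hdvd_u, hdvd_v⟩ : ∃ d ∈ nonunits (ℤ√2), d ≠ 0 ∧ d ∣ u ∧ d ∣ v := by
    by_contra! H
    exact h (isCoprime_of_dvd u v huv H)
  obtain ⟨e, hd1, hd1'⟩ := exists_unit_one_lt_toReal_mul hd0 hdu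
  obtain ⟨u₁, rfl⟩ := (Units.mul_right_dvd (u := e)).2 hdvd_u
  obtain ⟨v₁, rfl⟩ := (Units.mul_right_dvd (u := e)).2 hdvd_v
  obtain ⟨hxR, hxW⟩ := hx
  set y := (ι u₁ : ℂ) + ι v₁ * zeta8
  have hyR : y ∈ R8 := mem_R8_iff.2 ⟨u₁, v₁, rfl⟩
  have hxy : (ι (d * e * u₁) : ℂ) + ι (d * e * v₁) * zeta8 = ι (d * e) * y := by
    simp only [y, map_mul, ofReal_mul]; ring
  refine ⟨(ι (d * e))⁻¹, ⟨inv_pos.2 (by linarith), inv_lt_one_of_one_lt₀ hd1⟩, ?_⟩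
  rw [hxy, ← mul_assoc, ← ofReal_mul, inv_mul_cancel₀ (by linarith), ofReal_one, one_mul]
  refine ⟨hyR, ?_⟩
  rw [star_map_eq_ofReal_toReal_mul hσ hxR hyR hxy] at hxW
  simpa using ofReal_mul_mem_W8_of_abs_le (a := 1) hxW (by simpa using hd1')

lemma one_add_sqrt_two_mul_mem_W8_of_isCoprime (hσ : σ ⟨zeta8, zeta8_mem_R8⟩ = zeta8 ^ 3)
    {u v : ℤ√2} (hcop : IsCoprime u v) (hx : (ι u : ℂ) + ι v * zeta8 ∈ R8) {t : ℝ}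
    (ht : t ∈ Set.Ioo 0 1) (htx : (t : ℂ) * ((ι u : ℂ) + ι v * zeta8) ∈ ABverts σ) :
    (1 + √2 : ℂ) * σ ⟨_, hx⟩ ∈ W8 := by
  obtain ⟨htR, htW⟩ := htx
  obtain ⟨u', v', huv'⟩ := mem_R8_iff.1 htR
  obtain ⟨hu', hv'⟩ : ι u' = t * ι u ∧ ι v' = t * ι v :=
    ofReal_add_ofReal_mul_zeta8_inj.1 (by rw [huv']; push_cast; ring)
  -- a Bézout relation `a u + b v = 1` exhibits `t` as an element of `ℤ√2`
  obtain ⟨a, b, hab⟩ := hcop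
  have hw : ι (a * u' + b * v') = t := by
    have := congrArg ι hab
    simp only [map_add, map_mul, map_one] at this ⊢
    rw [hu', hv']; linear_combination t * this
  rw [← hw] at ht
  have hW := (star_map_eq_ofReal_toReal_mul hσ htR hx (by rw [hw])) ▸ htW
  have hbound := one_add_sqrt_two_le_abs_toReal_star ht.1 ht.2
  have hs := sqrt_two_bounds
  exact_mod_cast ofReal_mul_mem_W8_of_abs_le (a := 1 + √2) hW
    (by rwa [abs_of_pos (by linarith)])

end StarMap

end AmmannBeenker

open AmmannBeenker

/-- A nonzero vertex x = x₁ + x₂ζ₈ (x₁, x₂ ∈ ℤ[√2]) of the Ammann–Beenker point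
set is visible from the origin iff (1+√2)·σ(x) ∉ W₈ and the ideal of ℤ[√2]
generated by x₁ and x₂ is all of ℤ[√2]. Here σ is the ring homomorphism on
ℤ[ζ₈] determined by ζ₈ ↦ ζ₈³. -/
theorem ammann_beenker_visibility
    (σ : R8 →+* ℂ)
    (hσ : σ ⟨zeta8, Subring.subset_closure rfl⟩ = zeta8 ^ 3)
    (x : ℂ) (hxR : x ∈ R8) (hx0 : x ≠ 0) (hxT : x ∈ ABverts σ)
    (x₁ x₂ : S8) (hrep : (x₁ : ℂ) + (x₂ : ℂ) * zeta8 = x) :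
    (¬ ∃ t : ℝ, t ∈ Set.Ioo (0 : ℝ) 1 ∧ (t : ℂ) * x ∈ ABverts σ) ↔
      ((1 + Real.sqrt 2 : ℂ) * σ ⟨x, hxR⟩ ∉ W8 ∧
        Ideal.span {x₁, x₂} = (⊤ : Ideal S8)) := by
  obtain ⟨u, rfl⟩ := toS8.surjective x₁
  obtain ⟨v, rfl⟩ := toS8.surjective x₂
  rw [coe_toS8, coe_toS8] at hrep
  subst hrep
  have huv : ¬(u = 0 ∧ v = 0) := by rintro ⟨rfl, rfl⟩; simp at hx0
  rw [Ideal.span_insert, Ideal.sup_eq_top_iff_isCoprime, toS8.isCoprime_apply_iff]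
  constructor
  · intro hvis
    exact ⟨fun hW => hvis (exists_mem_ABverts_of_one_add_sqrt_two_mul_mem_W8 hσ hxR hW),
      by_contra fun hcop => hvis (exists_mem_ABverts_of_not_isCoprime hσ huv hxT hcop)⟩
  · rintro ⟨hW, hcop⟩ ⟨t, ht, htx⟩
    exact hW (one_add_sqrt_two_mul_mem_W8_of_isCoprime hσ hcop hxR ht htx)
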